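/- arXiv:1109.4874 — 13 statements merged into one kernel-verified Lean document; each statement's English description precedes it below -/
import Mathlib

section
/- There exists a system of n+1 difference equations of the form f(x+a_i) - f(x) = 1 (i = 1,...,n+1) such that every subsystem of size n has a solution f : ℝ → ℝ, but the whole system has no solution. Concretely: if a_1,...,a_n are linearly independent over ℚ and a_{n+1} = -(a_1+...+a_n), then any n of the equations Δ_{a_i} f = 1 are simultaneously solvable, but all n+1 are not. -/
/-!
Each subsystem omitting one equation is solved by a `ℚ`-linear map `g : ℝ → ℝ`, since then
`g (x + a i) - g x = g (a i)` and the values `g (a i)` for `i` among the first `n` indices can be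
prescribed freely: prescribe `1`, except at the omitted index `j < n`, where `-n` makes
`g (a n) = -∑ g (a i) = 1`. A solution `f` of the whole system would satisfy
`f (x + ∑ i ∈ s, a i) = f x + #s` for every `s`, which fails for `s = univ` since `∑ a i = 0`.
-/

theorem LinearIndependent.exists_linearMap_apply_eq {K V W ι : Type*} [DivisionRing K]
    [AddCommGroup V] [Module K V] [AddCommGroup W] [Module K W] {b : ι → V}
    (hb : LinearIndependent K b) (t : ι → W) : ∃ g : V →ₗ[K] W, ∀ i, g (b i) = t i := by
  obtain ⟨g, hg⟩ := LinearMap.exists_extend ((Finsupp.linearCombination K t).comp hb.repr)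
  refine ⟨g, fun i => ?_⟩
  let x : Submodule.span K (Set.range b) := ⟨b i, Submodule.subset_span (Set.mem_range_self i)⟩
  simpa [hb.repr_eq_single i x rfl] using congr($hg x)

theorem Finset.apply_add_sum_of_forall_sub_eq {G M ι : Type*} [AddCommMonoid G] [AddCommGroup M]
    (f : G → M) (a : ι → G) (c : M) (s : Finset ι) (h : ∀ i ∈ s, ∀ x, f (x + a i) - f x = c)
    (x : G) : f (x + ∑ i ∈ s, a i) = f x + s.card • c := by
  classical
  induction s using Finset.induction_on with
  | empty => simp
  | insert i s hi ih =>
    have step := h i (s.mem_insert_self i) (x + ∑ j ∈ s, a j)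
    rw [ih fun j hj => h j (s.mem_insert_of_mem hj)] at step
    rw [Finset.sum_insert hi, Finset.card_insert_of_notMem hi, add_comm (a i), ← add_assoc,
      succ_nsmul, ← add_assoc, ← sub_eq_iff_eq_add']
    exact step

theorem Fin.sum_eq_zero_of_last_eq_neg_sum {M : Type*} [AddCommGroup M] {n : ℕ}
    {a : Fin (n + 1) → M} (hlast : a (Fin.last n) = -∑ i : Fin n, a i.castSucc) :
    ∑ i, a i = 0 := by
  rw [Fin.sum_univ_castSucc, hlast, add_neg_cancel]

theorem exists_linearMap_apply_eq_one_of_ne {V : Type*} [AddCommGroup V] [Module ℚ V] {n : ℕ}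
    {a : Fin (n + 1) → V} (hli : LinearIndependent ℚ (fun i : Fin n => a i.castSucc))
    (hlast : a (Fin.last n) = -∑ i : Fin n, a i.castSucc) (j : Fin (n + 1)) :
    ∃ g : V →ₗ[ℚ] ℝ, ∀ i ≠ j, g (a i) = 1 := by
  induction j using Fin.lastCases with
  | last =>
    obtain ⟨g, hg⟩ := hli.exists_linearMap_apply_eq fun _ => (1 : ℝ)
    refine ⟨g, fun i hi => ?_⟩
    obtain ⟨i, rfl⟩ := Fin.exists_castSucc_eq.mpr hi
    exact hg i
  | cast j =>
    obtain ⟨g, hg⟩ := hli.exists_linearMap_apply_eq fun i => 1 - if i = j then (n + 1 : ℝ) else 0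
    refine ⟨g, fun i hi => ?_⟩
    induction i using Fin.lastCases with
    | last =>
      rw [hlast, map_neg, map_sum]
      simp [hg, Finset.sum_sub_distrib]
    | cast i =>
      have hij : i ≠ j := fun h => hi (congrArg Fin.castSucc h)
      simp [hg, hij]

/-- A system of `n+1` difference equations `f (x + a i) - f x = 1`, where
`a 0, …, a (n-1)` are linearly independent over `ℚ` and `a n = -(a 0 + ⋯ + a (n-1))`:
every subsystem of size `n` (obtained by omitting one equation) has a solution,
but the whole system has no solution. -/
theorem stmt0 (n : ℕ) (a : Fin (n + 1) → ℝ)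
    (hli : LinearIndependent ℚ (fun i : Fin n => a i.castSucc))
    (hlast : a (Fin.last n) = -∑ i : Fin n, a i.castSucc) :
    (∀ j : Fin (n + 1), ∃ f : ℝ → ℝ,
        ∀ i : Fin (n + 1), i ≠ j → ∀ x : ℝ, f (x + a i) - f x = 1) ∧
    ¬ ∃ f : ℝ → ℝ, ∀ i : Fin (n + 1), ∀ x : ℝ, f (x + a i) - f x = 1 := by
  refine ⟨fun j => ?_, ?_⟩
  · obtain ⟨g, hg⟩ := exists_linearMap_apply_eq_one_of_ne hli hlast j
    exact ⟨g, fun i hi x => by rw [map_add, add_sub_cancel_left, hg i hi]⟩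
  · rintro ⟨f, hf⟩
    have h := Finset.univ.apply_add_sum_of_forall_sub_eq f a 1 (fun i _ => hf i) 0
    rw [Fin.sum_eq_zero_of_last_eq_neg_sum hlast, Finset.card_univ, Fintype.card_fin, add_zero,
      left_eq_add, nsmul_eq_mul, mul_one] at h
    exact Nat.cast_ne_zero.mpr n.succ_ne_zero h
end

section
/- If a_1,...,a_{n+1} ∈ ℝ satisfy a_1 + ⋯ + a_{n+1} = 0, then there is no function f : ℝ → ℝ satisfying f(x + a_i) - f(x) = 1 for all x ∈ ℝ and all i = 1,...,n+1. -/
theorem apply_add_sum_eq_add_card_nsmul {ι M G : Type*} [AddCommMonoid M] [AddCommMonoid G]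
    {f : M → G} {a : ι → M} {c : G} (hf : ∀ i x, f (x + a i) = f x + c) (s : Finset ι) (x : M) :
    f (x + ∑ i ∈ s, a i) = f x + s.card • c := by
  classical
  induction s using Finset.induction_on generalizing x with
  | empty => simp
  | insert i s hi ih =>
    rw [Finset.sum_insert hi, ← add_assoc, ih, hf, Finset.card_insert_of_notMem hi, succ_nsmul',
      add_assoc]

/-- If `a 0 + ⋯ + a n = 0` then there is no `f : ℝ → ℝ` with
`f (x + a i) - f x = 1` for all `x` and all `i`. -/
theorem stmt1 (n : ℕ) (a : Fin (n + 1) → ℝ) (hsum : ∑ i, a i = 0) :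
    ¬ ∃ f : ℝ → ℝ, ∀ i : Fin (n + 1), ∀ x : ℝ, f (x + a i) - f x = 1 := by
  rintro ⟨f, hf⟩
  have hshift : ∀ i x, f (x + a i) = f x + 1 := fun i x => by linarith [hf i x]
  have h := apply_add_sum_eq_add_card_nsmul hshift Finset.univ 0
  rw [hsum, add_zero, Finset.card_univ, Fintype.card_fin, nsmul_one] at h
  have : (0 : ℝ) < (n + 1 : ℕ) := by positivity
  linarith
end

section
/- Let a_1,...,a_n ∈ ℝ be linearly independent over ℚ and let J ⊆ {1,...,n} have at most n-1 elements. Then there exists a function f : ℝ → ℝ with |f(x)| ≤ 1 for all x, such that f(x + a_i) - f(x) = (2/(n-1))·χ_{G_i}(x) for all x ∈ ℝ and all i ∈ J, where G_i is the additive subgroup of ℝ generated by {a_1,...,a_n} \ {a_i} and χ_{G_i} is its characteristic function. -/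
/-!
Since the `a i` are linearly independent over `ℤ`, every point `x` of the lattice
`Λ = ℤ a₀ + ⋯ + ℤ aₙ₋₁` has integer coordinates `m(x)`, translation by `a i` raises `m(x) i` by one,
and `x ∈ G i` exactly when `x ∈ Λ` and `m(x) i = 0`. Hence
`f x = (2/(n-1)) ∑_{i ∈ J} h (m(x) i)` on `Λ`, `f = 0` off `Λ`, works for the step function `h`
equal to `1/2` on positive integers and `-1/2` elsewhere, which jumps by one exactly from `0` to `1`;
the bound `|f| ≤ 1` comes from `|J| ≤ n - 1`.
-/

open Submodule Set

section LinearIndependent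

variable {ι R M : Type*} [Ring R] [AddCommGroup M] [Module R M] {v : ι → M}

theorem LinearIndependent.mem_span_image_iff (hv : LinearIndependent R v) {s : Set ι} {x : M} :
    x ∈ span R (v '' s) ↔ ∃ hx : x ∈ span R (range v), ↑(hv.repr ⟨x, hx⟩).support ⊆ s := by
  constructor
  · intro hx
    refine ⟨span_mono (image_subset_range v s) hx, ?_⟩
    obtain ⟨l, hl, rfl⟩ := (Finsupp.mem_span_image_iff_linearCombination R).1 hx
    rw [hv.repr_eq rfl]
    exact (Finsupp.mem_supported R l).1 hl
  · rintro ⟨hx, hsupp⟩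
    exact (Finsupp.mem_span_image_iff_linearCombination R).2
      ⟨hv.repr ⟨x, hx⟩, (Finsupp.mem_supported R _).2 hsupp, hv.linearCombination_repr _⟩

noncomputable def LinearIndependent.liftRepr {β : Type*} [Zero β] (hv : LinearIndependent R v)
    (Φ : (ι →₀ R) → β) (x : M) : β :=
  open Classical in
  if hx : x ∈ span R (range v) then Φ (hv.repr ⟨x, hx⟩) else 0

theorem LinearIndependent.liftRepr_add_sub_of_mem {β : Type*} [AddCommGroup β]
    (hv : LinearIndependent R v) (Φ : (ι →₀ R) → β) {x : M} (hx : x ∈ span R (range v)) (i : ι) :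
    hv.liftRepr Φ (x + v i) - hv.liftRepr Φ x =
      Φ (hv.repr ⟨x, hx⟩ + Finsupp.single i 1) - Φ (hv.repr ⟨x, hx⟩) := by
  have hvi : v i ∈ span R (range v) := subset_span (mem_range_self i)
  have hxi : x + v i ∈ span R (range v) := add_mem hx hvi
  have hrepr : hv.repr ⟨x + v i, hxi⟩ = hv.repr ⟨x, hx⟩ + Finsupp.single i 1 := by
    rw [← hv.repr_eq_single i ⟨v i, hvi⟩ rfl, ← map_add]
    rfl
  simp only [liftRepr, dif_pos hx, dif_pos hxi, hrepr]

theorem LinearIndependent.liftRepr_add_sub_of_notMem {β : Type*} [AddCommGroup β]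
    (hv : LinearIndependent R v) (Φ : (ι →₀ R) → β) {x : M} (hx : x ∉ span R (range v)) (i : ι) :
    hv.liftRepr Φ (x + v i) - hv.liftRepr Φ x = 0 := by
  have hxi : x + v i ∉ span R (range v) :=
    (Submodule.add_mem_iff_left _ (subset_span (mem_range_self i))).not.2 hx
  simp only [liftRepr, dif_neg hx, dif_neg hxi, sub_zero]

theorem LinearIndependent.abs_liftRepr_le {β : Type*} [AddCommGroup β] [LinearOrder β]
    [IsOrderedAddMonoid β] (hv : LinearIndependent R v) {Φ : (ι →₀ R) → β} {B : β}
    (hB : 0 ≤ B) (hΦ : ∀ r, |Φ r| ≤ B) (x : M) : |hv.liftRepr Φ x| ≤ B := by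
  unfold liftRepr
  split_ifs
  · exact hΦ _
  · rwa [abs_zero]

end LinearIndependent

theorem LinearIndependent.mem_closure_image_compl_singleton_iff {ι M : Type*} [AddCommGroup M]
    {a : ι → M} (ha : LinearIndependent ℤ a) {i : ι} {x : M} :
    x ∈ AddSubgroup.closure (a '' {i}ᶜ) ↔ ∃ hx : x ∈ span ℤ (range a), ha.repr ⟨x, hx⟩ i = 0 := by
  rw [← span_int_eq_addSubgroupClosure, mem_toAddSubgroup, ha.mem_span_image_iff]
  simp only [subset_compl_singleton_iff, Finset.mem_coe, Finsupp.mem_support_iff, not_not]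

noncomputable def halfStep (m : ℤ) : ℝ := if 0 < m then 1 / 2 else -1 / 2

theorem abs_halfStep (m : ℤ) : |halfStep m| = 1 / 2 := by
  unfold halfStep
  split_ifs <;> norm_num

theorem halfStep_add_one_sub (m : ℤ) : halfStep (m + 1) - halfStep m = if m = 0 then 1 else 0 := by
  unfold halfStep
  split_ifs <;> first | omega | norm_num

theorem sum_halfStep_add_single_sub {ι : Type*} [DecidableEq ι] {J : Finset ι} {i : ι} (hi : i ∈ J)
    (r : ι →₀ ℤ) :
    ∑ j ∈ J, halfStep ((r + Finsupp.single i 1 : ι →₀ ℤ) j) - ∑ j ∈ J, halfStep (r j) =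
      if r i = 0 then 1 else 0 := by
  rw [← Finset.sum_sub_distrib, Finset.sum_eq_single_of_mem i hi, Finsupp.add_apply,
    Finsupp.single_eq_same, halfStep_add_one_sub]
  intro j _ hji
  rw [Finsupp.add_apply, Finsupp.single_eq_of_ne hji, add_zero, sub_self]

theorem abs_sum_halfStep_le {ι : Type*} (J : Finset ι) (r : ι →₀ ℤ) :
    |∑ j ∈ J, halfStep (r j)| ≤ J.card / 2 :=
  calc |∑ j ∈ J, halfStep (r j)| ≤ ∑ j ∈ J, |halfStep (r j)| := Finset.abs_sum_le_sum_abs _ _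
    _ = J.card / 2 := by simp only [abs_halfStep, Finset.sum_const, nsmul_eq_mul]; ring

theorem abs_two_div_sub_one_mul_div_two_le_one {n k : ℕ} (hk : k ≤ n - 1) :
    |2 / ((n : ℝ) - 1)| * (k / 2) ≤ 1 := by
  rcases Nat.eq_zero_or_pos k with rfl | hk0
  · simp
  have hkn : (k : ℝ) ≤ n - 1 := by
    rw [← Nat.cast_one, ← Nat.cast_sub (by omega)]
    exact_mod_cast hk
  have hn : (0 : ℝ) < n - 1 := lt_of_lt_of_le (by exact_mod_cast hk0) hkn
  rw [abs_of_pos (by positivity), div_mul_div_comm, div_le_one (by positivity)]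
  linarith

theorem stmt2_general (n : ℕ) (a : Fin n → ℝ) (hli : LinearIndependent ℚ a)
    (J : Finset (Fin n)) (hJ : J.card ≤ n - 1) :
    ∃ f : ℝ → ℝ, (∀ x, |f x| ≤ 1) ∧
      ∀ i ∈ J, ∀ x : ℝ,
        f (x + a i) - f x =
          (2 / ((n : ℝ) - 1)) *
            Set.indicator ((AddSubgroup.closure {y : ℝ | ∃ j, j ≠ i ∧ a j = y} : AddSubgroup ℝ) :
              Set ℝ) 1 x := by
  classical
  have ha : LinearIndependent ℤ a := hli.restrict_scalars' ℤ
  refine ⟨ha.liftRepr fun r => 2 / ((n : ℝ) - 1) * ∑ j ∈ J, halfStep (r j),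
    ha.abs_liftRepr_le zero_le_one fun r => ?_, fun i hi x => ?_⟩
  · rw [abs_mul]
    exact (mul_le_mul_of_nonneg_left (abs_sum_halfStep_le J r) (abs_nonneg _)).trans
      (abs_two_div_sub_one_mul_div_two_le_one hJ)
  · change _ = _ * Set.indicator (AddSubgroup.closure (a '' {i}ᶜ) : Set ℝ) 1 x
    simp only [indicator_apply, SetLike.mem_coe, ha.mem_closure_image_compl_singleton_iff,
      Pi.one_apply]
    by_cases hx : x ∈ span ℤ (range a)
    · rw [ha.liftRepr_add_sub_of_mem _ hx, ← mul_sub, sum_halfStep_add_single_sub hi]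
      simp [hx]
    · rw [ha.liftRepr_add_sub_of_notMem _ hx]
      simp [hx]

/-- For `a 0, …, a (n-1)` linearly independent over `ℚ` and `J` of size at most `n - 1`,
there is a function `f` with `|f| ≤ 1` solving the equations
`f (x + a i) - f x = (2/(n-1)) · χ_{G i} x` for all `i ∈ J`, where `G i` is the
additive subgroup generated by the `a j`, `j ≠ i`. -/
theorem stmt2 (n : ℕ) (hn : 2 ≤ n) (a : Fin n → ℝ) (hli : LinearIndependent ℚ a)
    (J : Finset (Fin n)) (hJ : J.card ≤ n - 1) :
    ∃ f : ℝ → ℝ, (∀ x, |f x| ≤ 1) ∧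
      ∀ i ∈ J, ∀ x : ℝ,
        f (x + a i) - f x =
          (2 / ((n : ℝ) - 1)) *
            Set.indicator ((AddSubgroup.closure {y : ℝ | ∃ j, j ≠ i ∧ a j = y} : AddSubgroup ℝ) :
              Set ℝ) 1 x :=
  stmt2_general n a hli J hJ
end

section
/- Let a_1,...,a_n ∈ ℝ be linearly independent over ℚ, and for each i let G_i be the additive group generated by {a_j : j ≠ i}. If f : ℝ → ℝ satisfies f(x + a_i) - f(x) = (2/(n-1))·χ_{G_i}(x) for all x and all i = 1,...,n, then f(a_1 + ⋯ + a_n) - f(0) = 2n/(n-1); in particular no such f satisfies |f| ≤ 1 when n ≥ 2. -/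
/-!
Walk from `0` to `a 0 + ⋯ + a (n-1)` through the partial sums. The partial sum
`a 0 + ⋯ + a (k-1)` lies in `G k`, since it does not involve `a k`, so the step that adds `a k`
raises `f` by exactly `2/(n-1)`; the `n` steps add up to `2n/(n-1)`. For `n ≥ 2` this exceeds
`2`, while `|f| ≤ 1` would bound `f (∑ a) - f 0` by `2`.
-/

open Finset

namespace Fin

variable {M : Type*}

theorem sum_univ_succ_sub_castSucc [AddCommGroup M] {n : ℕ} (g : Fin (n + 1) → M) :
    ∑ k : Fin n, (g k.succ - g k.castSucc) = g (last n) - g 0 := by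
  induction n with
  | zero => simp
  | succ n ih =>
    rw [sum_univ_castSucc]
    simp only [← castSucc_succ, succ_last]
    rw [ih (fun k => g k.castSucc), castSucc_zero]
    abel

theorem partialSum_last [AddCommMonoid M] {n : ℕ} (a : Fin n → M) :
    partialSum a (last n) = ∑ i, a i := by
  simp [partialSum, List.take_of_length_le, List.sum_ofFn]

theorem partialSum_mem {S : Type*} [AddMonoid M] [SetLike S M] [AddSubmonoidClass S M] {s : S}
    {n : ℕ} (a : Fin n → M) (i : Fin (n + 1)) (h : ∀ j : Fin n, j.castSucc < i → a j ∈ s) :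
    partialSum a i ∈ s := by
  refine list_sum_mem fun x hx => ?_
  obtain ⟨k, hk, rfl⟩ := List.mem_iff_getElem.mp hx
  simp only [List.length_take, List.length_ofFn, lt_inf_iff, List.getElem_take,
    List.getElem_ofFn] at hk ⊢
  exact h _ (by simp [Fin.lt_def]; omega)

end Fin

theorem sub_eq_nsmul_of_add_sub_eq_on_closure {G M : Type*} [AddCommGroup G] [AddCommGroup M]
    {n : ℕ} (f : G → M) (a : Fin n → G) (c : M)
    (h : ∀ i, ∀ x ∈ AddSubgroup.closure {y | ∃ j, j ≠ i ∧ a j = y}, f (x + a i) - f x = c) :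
    f (∑ i, a i) - f 0 = n • c := by
  have step (k : Fin n) :
      f (Fin.partialSum a k.succ) - f (Fin.partialSum a k.castSucc) = c := by
    rw [Fin.partialSum_succ]
    refine h k _ (Fin.partialSum_mem a _ fun j hj => AddSubgroup.subset_closure ⟨j, ?_, rfl⟩)
    exact (Fin.castSucc_lt_castSucc_iff.mp hj).ne
  have telescope := Fin.sum_univ_succ_sub_castSucc fun k => f (Fin.partialSum a k)
  simp only [step, sum_const, card_univ, Fintype.card_fin, Fin.partialSum_last,
    Fin.partialSum_zero] at telescope
  exact telescope.symm

theorem stmt3_general (n : ℕ) (a : Fin n → ℝ) (f : ℝ → ℝ)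
    (hf : ∀ i : Fin n, ∀ x : ℝ,
      f (x + a i) - f x =
        (2 / ((n : ℝ) - 1)) *
          Set.indicator ((AddSubgroup.closure {y : ℝ | ∃ j, j ≠ i ∧ a j = y} : AddSubgroup ℝ) :
            Set ℝ) 1 x) :
    f (∑ i, a i) - f 0 = 2 * (n : ℝ) / ((n : ℝ) - 1) ∧
    (2 ≤ n → ¬ ∀ x, |f x| ≤ 1) := by
  have hsum : f (∑ i, a i) - f 0 = 2 * (n : ℝ) / ((n : ℝ) - 1) := by
    rw [sub_eq_nsmul_of_add_sub_eq_on_closure f a (2 / ((n : ℝ) - 1)) fun i x hx => by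
      rw [hf, Set.indicator_of_mem hx, Pi.one_apply, mul_one], nsmul_eq_mul]
    ring
  refine ⟨hsum, fun hn hbdd => ?_⟩
  have hn_real : (2 : ℝ) ≤ n := by exact_mod_cast hn
  have hgt : 2 < 2 * (n : ℝ) / ((n : ℝ) - 1) := by
    rw [lt_div_iff₀ (by linarith)]
    linarith
  have hle : f (∑ i, a i) - f 0 ≤ 2 := by
    linarith [(abs_le.mp (hbdd (∑ i, a i))).2, (abs_le.mp (hbdd 0)).1]
  linarith

/-- If `a 0, …, a (n-1)` are linearly independent over `ℚ`, `G i` is the additive subgroup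
generated by the `a j`, `j ≠ i`, and `f` solves all the equations
`f (x + a i) - f x = (2/(n-1)) · χ_{G i} x`, then `f (a 0 + ⋯ + a (n-1)) - f 0 = 2n/(n-1)`;
in particular if `n ≥ 2` then `|f| ≤ 1` fails. -/
theorem stmt3 (n : ℕ) (a : Fin n → ℝ) (hli : LinearIndependent ℚ a) (f : ℝ → ℝ)
    (hf : ∀ i : Fin n, ∀ x : ℝ,
      f (x + a i) - f x =
        (2 / ((n : ℝ) - 1)) *
          Set.indicator ((AddSubgroup.closure {y : ℝ | ∃ j, j ≠ i ∧ a j = y} : AddSubgroup ℝ) :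
            Set ℝ) 1 x) :
    f (∑ i, a i) - f 0 = 2 * (n : ℝ) / ((n : ℝ) - 1) ∧
    (2 ≤ n → ¬ ∀ x, |f x| ≤ 1) :=
  stmt3_general n a f hf
end

section
/- Let (a_i)_{i≥1} be a sequence of reals linearly independent over ℚ, and for each i let G_i be the additive group generated by {a_j : j ≠ i}. If f : ℝ → ℝ satisfies f(x + a_i) - f(x) = χ_{G_i}(x) for all x ∈ ℝ and all i ≥ 1, then f(a_1 + ⋯ + a_n) - f(0) = n for every n; in particular f is unbounded. -/
/-! Every partial sum `a 0 + ⋯ + a (n-1)` lies in the group generated by the `a j` with `j ≠ n`,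
so the equation for `i = n` at that point says that `f` increases by exactly `1` from one
partial sum to the next; telescoping gives `f (a 0 + ⋯ + a (n-1)) - f 0 = n`. -/

open Finset

theorem sum_range_mem_closure_ne {M : Type*} [AddCommGroup M] (a : ℕ → M) (n : ℕ) :
    ∑ i ∈ range n, a i ∈ AddSubgroup.closure {y : M | ∃ j, j ≠ n ∧ a j = y} :=
  AddSubgroup.sum_mem _ fun i hi =>
    AddSubgroup.subset_closure ⟨i, (mem_range.mp hi).ne, rfl⟩

theorem not_exists_abs_le_of_sub_eq_natCast {α : Type*} {f : α → ℝ} {x : ℕ → α} {x₀ : α}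
    (h : ∀ n : ℕ, f (x n) - f x₀ = n) : ¬ ∃ C : ℝ, ∀ y, |f y| ≤ C := by
  rintro ⟨C, hC⟩
  obtain ⟨n, hn⟩ := exists_nat_gt (2 * C)
  have h₁ := abs_le.mp (hC (x n))
  have h₀ := abs_le.mp (hC x₀)
  linarith [h n]

theorem stmt4_general (a : ℕ → ℝ) (f : ℝ → ℝ)
    (hf : ∀ i : ℕ, ∀ x : ℝ,
      f (x + a i) - f x =
        Set.indicator ((AddSubgroup.closure {y : ℝ | ∃ j, j ≠ i ∧ a j = y} : AddSubgroup ℝ) :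
          Set ℝ) 1 x) :
    (∀ n : ℕ, f (∑ i ∈ Finset.range n, a i) - f 0 = n) ∧
    ¬ ∃ C : ℝ, ∀ x, |f x| ≤ C := by
  have hstep : ∀ n, f (∑ i ∈ range (n + 1), a i) - f (∑ i ∈ range n, a i) = 1 := fun n => by
    rw [sum_range_succ, hf, Set.indicator_of_mem (sum_range_mem_closure_ne a n), Pi.one_apply]
  have hsum : ∀ n : ℕ, f (∑ i ∈ range n, a i) - f 0 = n := fun n => by
    simpa [hstep] using (sum_range_sub (fun n => f (∑ i ∈ range n, a i)) n).symm
  exact ⟨hsum, not_exists_abs_le_of_sub_eq_natCast hsum⟩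

/-- If `(a i)` is a sequence of reals linearly independent over `ℚ`, `G i` is the additive
subgroup generated by the `a j`, `j ≠ i`, and `f` solves all the equations
`f (x + a i) - f x = χ_{G i} x`, then `f (a 0 + ⋯ + a (n-1)) - f 0 = n` for every `n`;
in particular `f` is unbounded. -/
theorem stmt4 (a : ℕ → ℝ) (hli : LinearIndependent ℚ a) (f : ℝ → ℝ)
    (hf : ∀ i : ℕ, ∀ x : ℝ,
      f (x + a i) - f x =
        Set.indicator ((AddSubgroup.closure {y : ℝ | ∃ j, j ≠ i ∧ a j = y} : AddSubgroup ℝ) :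
          Set ℝ) 1 x) :
    (∀ n : ℕ, f (∑ i ∈ Finset.range n, a i) - f 0 = n) ∧
    ¬ ∃ C : ℝ, ∀ x, |f x| ≤ C :=
  stmt4_general a f hf
end

section
/- Let B ⊆ ℝ be a dense additive subgroup with |B| < 2^ω. Then there exists a Darboux function f : ℝ → ℝ such that f(x+b) - f(x) = χ_{{0}}(x+b) - χ_{{0}}(x) for every b ∈ B and every x ∈ ℝ. (Namely, take a bijection φ from the cosets ℝ/B onto ℝ and set f(x) = φ(B + x) + χ_{{0}}(x).) -/
/-!
Since `#ℝ = #(ℝ ⧸ B) * #B` and `#B < 𝔠`, the quotient `ℝ ⧸ B` has at least `𝔠` elements, so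
there is a surjection `φ : ℝ ⧸ B → ℝ`. Every coset of the dense subgroup `B` is dense, so
`x ↦ φ (B + x)` takes every value on every interval, even avoiding the point `0`; adding the
indicator of `{0}` therefore keeps it Darboux. The first summand is `B`-periodic, which gives the
functional equation.
-/

open Set Cardinal

theorem AddSubgroup.mk_le_mk_quotient_of_mk_lt {G : Type*} [AddGroup G] [Infinite G]
    (H : AddSubgroup G) (hH : #H < #G) : #G ≤ #(G ⧸ H) := by
  by_contra! h
  have hG : #G = #(G ⧸ H) * #H := by
    rw [mk_congr H.addGroupEquivQuotientProdAddSubgroup, mk_prod, lift_id, lift_id]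
  exact (mul_lt_of_lt (aleph0_le_mk G) h hH).ne hG.symm

theorem QuotientAddGroup.dense_preimage_mk_singleton {G : Type*} [TopologicalSpace G] [AddGroup G]
    [IsTopologicalAddGroup G] {H : AddSubgroup G} (hH : Dense (H : Set G)) (q : G ⧸ H) :
    Dense ((QuotientAddGroup.mk : G → G ⧸ H) ⁻¹' {q}) := by
  obtain ⟨r, rfl⟩ := QuotientAddGroup.mk_surjective q
  have hcoset : (QuotientAddGroup.mk : G → G ⧸ H) ⁻¹' {(r : G ⧸ H)} = (-r + ·) ⁻¹' H :=
    Set.ext fun _ ↦ eq_comm.trans QuotientAddGroup.eq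
  rw [hcoset]
  exact hH.preimage (Homeomorph.addLeft (-r)).isOpenMap

theorem exists_mem_Ioo_add_indicator_singleton_eq {g : ℝ → ℝ} (hg : ∀ y, Dense (g ⁻¹' {y}))
    (z : ℝ) (c : ℝ → ℝ) {a b : ℝ} (hab : a < b) (y : ℝ) :
    ∃ x ∈ Ioo a b, g x + indicator {z} c x = y := by
  obtain ⟨x, ⟨hgx, hxz⟩, hx⟩ := ((hg y).sdiff_singleton z).exists_between hab
  exact ⟨x, hx, by rw [indicator_of_notMem hxz, add_zero, hgx]⟩

/-- If `B` is a dense additive subgroup of `ℝ` of cardinality less than the continuum,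
then there is a Darboux function `f : ℝ → ℝ` with
`f (x+b) - f x = χ_{{0}} (x+b) - χ_{{0}} x` for all `b ∈ B` and all `x`. -/
theorem stmt6 (B : AddSubgroup ℝ) (hd : Dense (B : Set ℝ))
    (hcard : Cardinal.mk B < Cardinal.continuum) :
    ∃ f : ℝ → ℝ,
      (∀ a b : ℝ, a < b → ∀ y ∈ Set.uIcc (f a) (f b), ∃ x ∈ Set.Icc a b, f x = y) ∧
      ∀ b ∈ B, ∀ x : ℝ, f (x + b) - f x =
        Set.indicator ({0} : Set ℝ) 1 (x + b) - Set.indicator ({0} : Set ℝ) 1 x := by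
  have hquot : #ℝ ≤ #(ℝ ⧸ B) := B.mk_le_mk_quotient_of_mk_lt (by rwa [mk_real])
  obtain ⟨e⟩ := hquot
  set φ : ℝ ⧸ B → ℝ := Function.invFun e
  have hφ : Function.Surjective φ := Function.invFun_surjective e.injective
  have hfibers : ∀ y, Dense ((fun x : ℝ ↦ φ x) ⁻¹' {y}) := fun y ↦ by
    obtain ⟨q, rfl⟩ := hφ y
    exact (QuotientAddGroup.dense_preimage_mk_singleton hd q).mono
      fun x (hx : (x : ℝ ⧸ B) = q) ↦ by simp [hx]
  refine ⟨fun x ↦ φ x + indicator {0} 1 x, fun a b hab y _ ↦ ?_, fun b hb x ↦ ?_⟩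
  · obtain ⟨x, hx, hfx⟩ := exists_mem_Ioo_add_indicator_singleton_eq hfibers 0 1 hab y
    exact ⟨x, Ioo_subset_Icc_self hx, hfx⟩
  · simp only [QuotientAddGroup.mk_add_of_mem x hb]
    ring
end

section
/- Let h : ℝ → ℝ have the Baire property and let (t_n) be a real sequence with t_n → 0. Then there is a comeager (residual) set of points x at which h(x + t_n) → h(x). -/
/-!
Continuous open maps pull comeager sets back to comeager sets, so for a comeager set `s` on which
`h` is continuous, the points `x` with `x ∈ s` and `x + t n ∈ s` for all `n` form a countable
intersection of comeager sets. At such `x`, continuity of `h` relative to `s` gives the limit.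
-/

open Filter Topology

theorem eventually_residual_tendsto_comp_of_continuousOn {X Y ι : Type*} [TopologicalSpace X]
    [TopologicalSpace Y] [Countable ι] {l : Filter ι} {f : X → Y} {s : Set X}
    (hs : s ∈ residual X) (hf : ContinuousOn f s) {g : ι → X → X}
    (hg_cont : ∀ i, Continuous (g i)) (hg_open : ∀ i, IsOpenMap (g i))
    (hg : ∀ x, Tendsto (fun i => g i x) l (𝓝 x)) :
    ∀ᶠ x in residual X, Tendsto (fun i => f (g i x)) l (𝓝 (f x)) := by
  have hpre : ∀ i, g i ⁻¹' s ∈ residual X := fun i =>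
    tendsto_residual_of_isOpenMap (hg_cont i) (hg_open i) hs
  filter_upwards [hs, countable_iInter_mem.mpr hpre] with x hxs hx
  have hx' : Tendsto (fun i => g i x) l (𝓝[s] x) :=
    tendsto_nhdsWithin_of_tendsto_nhds_of_eventually_within _ (hg x)
      (Eventually.of_forall (Set.mem_iInter.mp hx))
  exact (hf x hxs).tendsto.comp hx'

/-- If `h : ℝ → ℝ` has the Baire property (equivalently, is continuous on some comeager set)
and `t n → 0`, then the set of points `x` with `h (x + t n) → h x` is comeager. -/
theorem stmt8 (h : ℝ → ℝ) (hBP : ∃ s ∈ residual ℝ, ContinuousOn h s)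
    (t : ℕ → ℝ) (ht : Filter.Tendsto t Filter.atTop (nhds 0)) :
    {x : ℝ | Filter.Tendsto (fun n => h (x + t n)) Filter.atTop (nhds (h x))}
      ∈ residual ℝ := by
  obtain ⟨s, hs, hcont⟩ := hBP
  refine eventually_residual_tendsto_comp_of_continuousOn hs hcont
    (fun n => continuous_add_const (t n)) (fun n => isOpenMap_add_right (t n)) fun x => ?_
  simpa using (tendsto_const_nhds (x := x)).add ht
end

section
/- Let φ₁, φ₂ : ℝ → ℝ be functions of Baire class 1, with φ₁ periodic mod b₁ and φ₂ periodic mod b₂ (b₁, b₂ ≠ 0), and let c > 1. If φ₁(x) = φ₂(x)·c^x for all x ∈ ℝ, then φ₂ is identically zero (and hence so is φ₁). -/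
/-!
Periodicity of `φ₁ = φ₂ · c^x` gives `φ₂ (y + k b₁ + l b₂) = c^(-k b₁) φ₂ y` for all integers
`k, l`. If `b₁/b₂` is rational, some `k b₁ + l b₂ = 0` with `k ≠ 0`, and this identity alone forces
`φ₂ = 0`. If `b₁/b₂` is irrational, the forward orbit `n ↦ -n b₁` is dense modulo `b₂`, so if
`φ₂ x ≠ 0` the points `x - n b₁ + l b₂` with `n → ∞` enter every nonempty open set, and there `|φ₂|`
takes the values `c^(n b₁) |φ₂ x| → ∞`. But a Baire class 1 function is bounded on some nonempty
open set (Baire category theorem).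
-/

/-- `f` is a pointwise limit of continuous functions. -/
def BaireClassOne (f : ℝ → ℝ) : Prop :=
  ∃ g : ℕ → ℝ → ℝ, (∀ n, Continuous (g n)) ∧
    ∀ x, Filter.Tendsto (fun n => g n x) Filter.atTop (nhds (f x))

open Filter Topology

theorem Function.Periodic.abs {α β : Type*} [AddGroup α] [LinearOrder α] {f : α → β} {b : α}
    (hf : Function.Periodic f b) : Function.Periodic f |b| := by
  rcases abs_choice b with h | h <;> rw [h]
  exacts [hf, hf.neg]

theorem exists_isOpen_forall_norm_le_of_tendsto {X E : Type*} [TopologicalSpace X] [BaireSpace X]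
    [Nonempty X] [SeminormedAddCommGroup E] {f : X → E} {g : ℕ → X → E}
    (hg : ∀ n, Continuous (g n)) (hf : ∀ x, Tendsto (fun n => g n x) atTop (𝓝 (f x))) :
    ∃ U : Set X, IsOpen U ∧ U.Nonempty ∧ ∃ M, ∀ y ∈ U, ‖f y‖ ≤ M := by
  set A : ℕ → Set X := fun N => {x | ∀ n, ‖g n x‖ ≤ N}
  have hA : ∀ N, IsClosed (A N) := fun N => by
    simp only [A, Set.ofPred_forall]
    exact isClosed_iInter fun n => isClosed_le (hg n).norm continuous_const
  have hcover : ⋃ N, A N = Set.univ := by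
    refine Set.eq_univ_of_forall fun x => Set.mem_iUnion.2 ?_
    obtain ⟨C, hC⟩ := isBounded_iff_forall_norm_le.1 (Metric.isBounded_range_of_tendsto _ (hf x))
    obtain ⟨N, hN⟩ := exists_nat_ge C
    exact ⟨N, fun n => (hC _ ⟨n, rfl⟩).trans hN⟩
  obtain ⟨N, hN⟩ := nonempty_interior_of_iUnion_of_closed hA hcover
  refine ⟨interior (A N), isOpen_interior, hN, N, fun y hy => ?_⟩
  exact le_of_tendsto' (hf y).norm (interior_subset hy)

theorem BaireClassOne.exists_isOpen_forall_norm_le {f : ℝ → ℝ} (hf : BaireClassOne f) :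
    ∃ U : Set ℝ, IsOpen U ∧ U.Nonempty ∧ ∃ M, ∀ y ∈ U, ‖f y‖ ≤ M :=
  let ⟨_, hg, hlim⟩ := hf
  exists_isOpen_forall_norm_le_of_tendsto hg hlim

theorem Irrational.frequently_exists_nat_mul_add_int_mul_mem {a T : ℝ} (hT : 0 < T)
    (ha : Irrational (a / T)) {U : Set ℝ} (hU : IsOpen U) (hne : U.Nonempty) :
    ∃ᶠ n : ℕ in atTop, ∃ m : ℤ, n * a + m * T ∈ U := by
  have : Fact (0 < T) := ⟨hT⟩
  obtain ⟨p, hp⟩ := hne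
  have hdense : Dense (AddSubgroup.zmultiples (a : AddCircle T) : Set (AddCircle T)) := by
    simpa [DenseRange, ← AddSubgroup.coe_zmultiples] using AddCircle.denseRange_zsmul_coe_iff.2 ha
  have hclus : MapClusterPt (p : AddCircle T) atTop (· • (a : AddCircle T) : ℕ → AddCircle T) := by
    rw [mapClusterPt_atTop_nsmul_iff_mem_topologicalClosure_zmultiples, ← SetLike.mem_coe,
      AddSubgroup.topologicalClosure_coe, hdense.closure_eq]
    trivial
  have hV : ((↑) '' U : Set (AddCircle T)) ∈ 𝓝 (p : AddCircle T) :=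
    (QuotientAddGroup.isOpenMap_coe U hU).mem_nhds ⟨p, hp, rfl⟩
  refine (mapClusterPt_iff_frequently.1 hclus _ hV).mono fun n ⟨y, hy, hyn⟩ => ?_
  rw [← QuotientAddGroup.mk_nat_mul, QuotientAddGroup.eq_iff_sub_mem] at hyn
  obtain ⟨m, hm⟩ := AddSubgroup.mem_zmultiples_iff.1 hyn
  rw [zsmul_eq_mul, eq_sub_iff_add_eq] at hm
  exact ⟨m, by rwa [add_comm, hm]⟩

section

variable {φ₁ φ₂ : ℝ → ℝ} {b₁ b₂ c : ℝ}

theorem apply_add_int_mul_mul_rpow_eq (hc : 0 < c) (hp₁ : Function.Periodic φ₁ b₁)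
    (heq : ∀ x, φ₁ x = φ₂ x * c ^ x) (m : ℤ) (y : ℝ) :
    φ₂ (y + m * b₁) * c ^ (m * b₁) = φ₂ y := by
  have h := hp₁.int_mul m y
  rw [heq, heq, Real.rpow_add hc] at h
  exact mul_right_cancel₀ (Real.rpow_pos_of_pos hc y).ne' (by linear_combination h)

theorem eq_zero_of_int_mul_eq_int_mul (hc : 1 < c) (hp₁ : Function.Periodic φ₁ b₁)
    (hp₂ : Function.Periodic φ₂ b₂) (heq : ∀ x, φ₁ x = φ₂ x * c ^ x) {k l : ℤ}
    (hkl : k * b₁ = l * b₂) (hne : k * b₁ ≠ 0) (y : ℝ) : φ₂ y = 0 := by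
  have h := apply_add_int_mul_mul_rpow_eq (by linarith) hp₁ heq k y
  have hc1 : c ^ (k * b₁) ≠ 1 := by
    intro h1
    rcases hne.lt_or_gt with hlt | hgt
    · exact (Real.rpow_lt_one_of_one_lt_of_neg hc hlt).ne h1
    · exact (Real.one_lt_rpow hc hgt).ne' h1
  rw [hkl, hp₂.int_mul l y, ← hkl] at h
  have : φ₂ y * (c ^ (k * b₁) - 1) = 0 := by linear_combination h
  exact (mul_eq_zero.1 this).resolve_right (sub_ne_zero.2 hc1)

theorem eq_zero_of_irrational_of_bounded (hb₁ : 0 < b₁) (hb₂ : 0 < b₂)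
    (hirr : Irrational (b₁ / b₂)) (hc : 1 < c) (hp₁ : Function.Periodic φ₁ b₁)
    (hp₂ : Function.Periodic φ₂ b₂) (heq : ∀ x, φ₁ x = φ₂ x * c ^ x) {U : Set ℝ}
    (hU : IsOpen U) (hne : U.Nonempty) {M : ℝ} (hM : ∀ y ∈ U, ‖φ₂ y‖ ≤ M) (x : ℝ) :
    φ₂ x = 0 := by
  by_contra hx
  have hc0 : 0 < c := by linarith
  have hgrowth : ∀ (n : ℕ) (m : ℤ), φ₂ (x + (n * -b₁ + m * b₂)) = φ₂ x * (c ^ b₁) ^ n := by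
    intro n m
    have h := apply_add_int_mul_mul_rpow_eq hc0 hp₁ heq n (x + (n * -b₁ + m * b₂))
    rw [Int.cast_natCast, show x + (n * -b₁ + m * b₂) + n * b₁ = x + m * b₂ by ring,
      hp₂.int_mul m x, mul_comm (n : ℝ), Real.rpow_mul_natCast hc0.le] at h
    exact h.symm
  have hbig : ∀ᶠ n : ℕ in atTop, M < ‖φ₂ x‖ * (c ^ b₁) ^ n :=
    ((tendsto_pow_atTop_atTop_of_one_lt (Real.one_lt_rpow hc hb₁)).const_mul_atTop
      (norm_pos_iff.2 hx)).eventually_gt_atTop M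
  have hU' : IsOpen {y | x + y ∈ U} := hU.preimage (continuous_const_add x)
  obtain ⟨p, hp⟩ := hne
  have hfreq := (neg_div b₂ b₁ ▸ hirr.neg).frequently_exists_nat_mul_add_int_mul_mem hb₂ hU'
    ⟨p - x, by simpa using hp⟩
  obtain ⟨n, ⟨m, hm⟩, hn⟩ := (hfreq.and_eventually hbig).exists
  have := hM _ hm
  rw [hgrowth, norm_mul, norm_pow, Real.norm_of_nonneg (Real.rpow_pos_of_pos hc0 _).le] at this
  linarith

theorem eq_zero_of_periodic_of_bounded (hb₁ : 0 < b₁) (hb₂ : 0 < b₂) (hc : 1 < c)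
    (hp₁ : Function.Periodic φ₁ b₁) (hp₂ : Function.Periodic φ₂ b₂)
    (heq : ∀ x, φ₁ x = φ₂ x * c ^ x) {U : Set ℝ} (hU : IsOpen U) (hne : U.Nonempty) {M : ℝ}
    (hM : ∀ y ∈ U, ‖φ₂ y‖ ≤ M) (x : ℝ) : φ₂ x = 0 := by
  by_cases hirr : Irrational (b₁ / b₂)
  · exact eq_zero_of_irrational_of_bounded hb₁ hb₂ hirr hc hp₁ hp₂ heq hU hne hM x
  · obtain ⟨q, hq⟩ : ∃ q : ℚ, (q : ℝ) = b₁ / b₂ := by simpa [Irrational] using hirr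
    refine eq_zero_of_int_mul_eq_int_mul hc hp₁ hp₂ heq (k := q.den) (l := q.num) ?_ ?_ x
    · rw [Rat.cast_def, div_eq_div_iff (by positivity) hb₂.ne'] at hq
      push_cast
      linarith
    · push_cast
      positivity

end

theorem stmt10_general (φ₁ φ₂ : ℝ → ℝ) (b₁ b₂ : ℝ) (hb₁ : b₁ ≠ 0) (hb₂ : b₂ ≠ 0)
    (h₂ : BaireClassOne φ₂)
    (hp₁ : ∀ x, φ₁ (x + b₁) = φ₁ x) (hp₂ : ∀ x, φ₂ (x + b₂) = φ₂ x)
    (c : ℝ) (hc : 1 < c) (heq : ∀ x, φ₁ x = φ₂ x * c ^ x) :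
    ∀ x, φ₂ x = 0 ∧ φ₁ x = 0 := by
  obtain ⟨U, hU, hne, M, hM⟩ := h₂.exists_isOpen_forall_norm_le
  have hφ₂ : ∀ x, φ₂ x = 0 :=
    eq_zero_of_periodic_of_bounded (abs_pos.2 hb₁) (abs_pos.2 hb₂) hc
      (Function.Periodic.abs hp₁) (Function.Periodic.abs hp₂) heq hU hne hM
  exact fun x => ⟨hφ₂ x, by rw [heq, hφ₂, zero_mul]⟩

/-- If `φ₁, φ₂` are Baire class 1, periodic mod `b₁` resp. `b₂` (both nonzero), `c > 1`
and `φ₁ x = φ₂ x · c^x` for all `x`, then `φ₂` (hence `φ₁`) vanishes identically. -/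
theorem stmt10 (φ₁ φ₂ : ℝ → ℝ) (b₁ b₂ : ℝ) (hb₁ : b₁ ≠ 0) (hb₂ : b₂ ≠ 0)
    (h₁ : BaireClassOne φ₁) (h₂ : BaireClassOne φ₂)
    (hp₁ : ∀ x, φ₁ (x + b₁) = φ₁ x) (hp₂ : ∀ x, φ₂ (x + b₂) = φ₂ x)
    (c : ℝ) (hc : 1 < c) (heq : ∀ x, φ₁ x = φ₂ x * c ^ x) :
    ∀ x, φ₂ x = 0 ∧ φ₁ x = 0 :=
  stmt10_general φ₁ φ₂ b₁ b₂ hb₁ hb₂ h₂ hp₁ hp₂ c hc heq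
end

section
/- Let a₁, a₂, b₁, b₂ be nonzero reals with |a₁|^{1/b₁} ≠ |a₂|^{1/b₂}. If a Baire class 1 function f : ℝ → ℝ satisfies both f(x+b₁) = a₁ f(x) and f(x+b₂) = a₂ f(x) for all x, then f is identically zero. -/
/-!
With `cᵢ = log |aᵢ| / bᵢ`, the function `φ x = exp (-c₁ x) * |f x|` is `b₁`-periodic and satisfies
`φ (x + b₂) = λ φ x` with `λ = exp ((c₂ - c₁) b₂) ≠ 1`. By the Baire category theorem `f`, hence
`φ`, is bounded on some interval `I`. If `b₂ / b₁ = p / q` is rational, `q b₂ - p b₁ = 0` gives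
`φ = λ ^ q φ`, so `φ = 0`. Otherwise `ℤ b₁ + ℤ b₂` is dense and contains some `σ = n b₁ + k b₂`
with `0 < |σ| < |I|` and `|λ ^ k| > 1`, so `φ (x + σ) = λ ^ k φ x`. Steps of length `|σ|` cannot
jump over `I`, so together with the period `b₁` they carry `x₀ + J σ` into `I` by nonnegatively
many further steps; where `φ x₀ ≠ 0` this produces values of `|φ|` on `I` at least
`|λ ^ k| ^ J |φ x₀|` for every `J`, contradicting boundedness.
-/

open Set Real Function Filter

theorem apply_add_zsmul_eq_zpow_mul {G M : Type*} [AddGroup G] [CommGroupWithZero M]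
    {f : G → M} {a : M} {b : G} (ha : a ≠ 0) (h : ∀ x, f (x + b) = a * f x) (n : ℤ) (x : G) :
    f (x + n • b) = a ^ n * f x := by
  induction n using Int.induction_on generalizing x with
  | zero => simp
  | succ n ih =>
    rw [add_zsmul, one_zsmul, ← add_assoc, h, ih, zpow_add_one₀ ha, mul_assoc, mul_left_comm]
  | pred n ih =>
    have key := h (x + (-n - 1 : ℤ) • b)
    rw [add_assoc, ← add_one_zsmul, sub_add_cancel, ih] at key
    rw [zpow_sub_one₀ ha, mul_comm _ a⁻¹, mul_assoc, eq_inv_mul_iff_mul_eq₀ ha, key]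

theorem exists_add_nsmul_add_zsmul_mem_Ioo {α β σ b : ℝ} (hσ : σ ≠ 0) (hσαβ : |σ| < β - α)
    (hb : b ≠ 0) (y : ℝ) : ∃ j : ℕ, ∃ m : ℤ, y + j • σ + m • b ∈ Ioo α β := by
  wlog hσ₀ : 0 < σ generalizing y α β σ b
  · obtain ⟨j, m, hmem⟩ := this (α := -β) (β := -α) (neg_ne_zero.2 hσ)
      (by rwa [abs_neg, sub_neg_eq_add, neg_add_eq_sub]) (neg_ne_zero.2 hb) (-y)
      (neg_pos.2 (lt_of_le_of_ne (not_lt.1 hσ₀) hσ))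
    refine ⟨j, m, ?_⟩
    rwa [smul_neg, smul_neg, ← neg_add, ← neg_add, neg_mem_Ioo_iff, neg_neg, neg_neg] at hmem
  wlog hb₀ : 0 < b generalizing b
  · obtain ⟨j, m, hmem⟩ := this (neg_ne_zero.2 hb) (neg_pos.2 (lt_of_le_of_ne (not_lt.1 hb₀) hb))
    exact ⟨j, -m, by rwa [neg_zsmul, ← zsmul_neg]⟩
  obtain ⟨m, hm⟩ := exists_int_lt ((β - y) / b)
  -- steps of length `σ < β - α` cannot jump over `(α, β)`
  obtain ⟨k, ⟨hk₁, hk₂⟩, -⟩ := existsUnique_add_zsmul_mem_Ico hσ₀ (y + m • b) (β - σ)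
  have hmb : y + m • b < β := by
    rw [zsmul_eq_mul]; linarith [(lt_div_iff₀ hb₀).1 hm]
  have hk : 0 ≤ k := by
    simp only [zsmul_eq_mul] at hk₁ hmb
    have : (-1 : ℝ) < k := by
      by_contra! h
      nlinarith
    have : (-1 : ℤ) < k := by exact_mod_cast this
    omega
  lift k to ℕ using hk
  rw [natCast_zsmul, add_right_comm] at hk₁ hk₂
  exact ⟨k, m, by linarith [le_abs_self σ], by linarith⟩

theorem Irrational.exists_zsmul_add_zsmul_mem_Ioo {b₁ b₂ ε : ℝ} (h : Irrational (b₂ / b₁))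
    (hε : 0 < ε) : ∃ n k : ℤ, k ≠ 0 ∧ n • b₁ + k • b₂ ∈ Ioo 0 ε := by
  have hb₁ : b₁ ≠ 0 := (div_ne_zero_iff.1 h.ne_zero).2
  obtain ⟨s, hsG, hs₀, hs⟩ := (dense_addSubgroupClosure_pair_iff.2 h).exists_mem_open isOpen_Ioo
    (nonempty_Ioo.2 (lt_min hε (abs_pos.2 hb₁)))
  obtain ⟨k, n, rfl⟩ := AddSubgroup.mem_closure_pair.1 hsG
  refine ⟨n, k, ?_, by rw [add_comm]; exact ⟨hs₀, hs.trans_le (min_le_left _ _)⟩⟩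
  rintro rfl
  rw [zero_zsmul, zero_add] at hs₀ hs
  have hn : n ≠ 0 := by rintro rfl; simp at hs₀
  have : |b₁| ≤ n • b₁ :=
    calc |b₁| ≤ |n| * |b₁| :=
          le_mul_of_one_le_left (abs_nonneg _) (by exact_mod_cast Int.one_le_abs hn)
      _ = |n • b₁| := by rw [zsmul_eq_mul, abs_mul, Int.cast_abs]
      _ = n • b₁ := abs_of_pos hs₀
  exact (hs.trans_le (min_le_right _ _)).not_ge this

namespace Function.Periodic

variable {φ : ℝ → ℝ} {b : ℝ} {α β M : ℝ}

theorem eq_zero_of_apply_add_eq_mul_of_abs_lt_sub (hφ : Periodic φ b) (hb : b ≠ 0) {σ μ : ℝ}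
    (hσ : σ ≠ 0) (hσαβ : |σ| < β - α) (hμ₀ : μ ≠ 0) (hμ : |μ| ≠ 1)
    (hσμ : ∀ x, φ (x + σ) = μ * φ x) (hM : ∀ x ∈ Ioo α β, |φ x| ≤ M) (x₀ : ℝ) : φ x₀ = 0 := by
  wlog hμ₁ : 1 < |μ| generalizing σ μ
  · refine this (neg_ne_zero.2 hσ) (by rwa [abs_neg]) (inv_ne_zero hμ₀)
      (by rwa [abs_inv, inv_ne_one]) (fun x => ?_) ?_
    · rw [eq_inv_mul_iff_mul_eq₀ hμ₀, ← hσμ, neg_add_cancel_right]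
    · rw [abs_inv]; exact one_lt_inv₀ (abs_pos.2 hμ₀) |>.2 (lt_of_le_of_ne (not_lt.1 hμ₁) hμ)
  by_contra hx₀
  have hstep (j : ℕ) (x : ℝ) : φ (x + j • σ) = μ ^ j * φ x := by
    simpa using apply_add_zsmul_eq_zpow_mul hμ₀ hσμ j x
  obtain ⟨J, hJ⟩ := pow_unbounded_of_one_lt (M / |φ x₀|) hμ₁
  obtain ⟨j, m, hmem⟩ := exists_add_nsmul_add_zsmul_mem_Ioo hσ hσαβ hb (x₀ + J • σ)
  have := calc
    M < |μ| ^ J * |φ x₀| := (div_lt_iff₀ (abs_pos.2 hx₀)).1 hJ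
    _ ≤ |μ| ^ j * (|μ| ^ J * |φ x₀|) := le_mul_of_one_le_left (by positivity) (one_le_pow₀ hμ₁.le)
    _ = |φ (x₀ + J • σ + j • σ + m • b)| := by
      rw [hφ.zsmul m, hstep, hstep, abs_mul, abs_mul, abs_pow, abs_pow]
    _ ≤ M := hM _ hmem
  exact this.false

theorem eq_zero_of_apply_add_eq_mul (hφ : Periodic φ b) (hb : b ≠ 0) {b' c : ℝ}
    (hc₀ : c ≠ 0) (hc : |c| ≠ 1) (hb' : ∀ x, φ (x + b') = c * φ x) (hαβ : α < β)
    (hM : ∀ x ∈ Ioo α β, |φ x| ≤ M) (x : ℝ) : φ x = 0 := by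
  have horbit (n k : ℤ) (x : ℝ) : φ (x + (n • b + k • b')) = c ^ k * φ x := by
    rw [← add_assoc, apply_add_zsmul_eq_zpow_mul hc₀ hb', hφ.zsmul]
  by_cases hirr : Irrational (b' / b)
  · obtain ⟨n, k, hk, hσ₀, hσ⟩ := hirr.exists_zsmul_add_zsmul_mem_Ioo (sub_pos.2 hαβ)
    refine hφ.eq_zero_of_apply_add_eq_mul_of_abs_lt_sub hb hσ₀.ne' (by rwa [abs_of_pos hσ₀])
      (zpow_ne_zero k hc₀) ?_ (horbit n k) hM x
    rwa [abs_zpow, Ne, zpow_eq_one_iff_right₀ (abs_nonneg _) hc]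
  -- `b' / b = p / q` makes `-p • b + q • b'` a vanishing quasi-period with factor `c ^ q ≠ 1`
  obtain ⟨r, hr⟩ := not_not.1 hirr
  have hrel : (-r.num) • b + (r.den : ℤ) • b' = 0 := by
    rw [Rat.cast_def, div_eq_div_iff (Nat.cast_ne_zero.2 r.den_ne_zero) hb] at hr
    simp only [zsmul_eq_mul]; push_cast; linarith
  have hpow : c ^ r.den ≠ 1 := fun h =>
    hc ((pow_eq_one_iff_of_nonneg (abs_nonneg _) r.den_ne_zero).1 (by rw [← abs_pow, h, abs_one]))
  have := horbit (-r.num) r.den x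
  rw [hrel, add_zero, zpow_natCast, eq_comm] at this
  by_contra hx
  exact hpow ((mul_eq_right₀ hx).1 this)

end Function.Periodic

theorem BaireClassOne.exists_abs_le_on_Ioo {f : ℝ → ℝ} (hf : BaireClassOne f) :
    ∃ α β M : ℝ, α < β ∧ ∀ x ∈ Ioo α β, |f x| ≤ M := by
  obtain ⟨g, hg, hlim⟩ := hf
  let C (n : ℕ) : Set ℝ := ⋂ k, {x | |g k x| ≤ n}
  have hC (n : ℕ) : IsClosed (C n) :=
    isClosed_iInter fun k => isClosed_le (hg k).abs continuous_const
  have hcover : ⋃ n, C n = univ := by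
    refine eq_univ_of_forall fun x => mem_iUnion.2 ?_
    obtain ⟨B, hB⟩ := (hlim x).abs.bddAbove_range
    obtain ⟨n, hn⟩ := exists_nat_ge B
    exact ⟨n, mem_iInter.2 fun k => (hB ⟨k, rfl⟩).trans hn⟩
  obtain ⟨n, x, hx⟩ := nonempty_interior_of_iUnion_of_closed hC hcover
  obtain ⟨α, β, hxαβ, hαβ⟩ := mem_nhds_iff_exists_Ioo_subset.1 (mem_interior_iff_mem_nhds.1 hx)
  refine ⟨α, β, n, hxαβ.1.trans hxαβ.2, fun y hy => ?_⟩
  have hy : ∀ k, |g k y| ≤ n := by simpa [C] using hαβ hy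
  exact le_of_tendsto (hlim y).abs (Eventually.of_forall hy)

theorem exists_abs_mul_le_on_Ioo {f g : ℝ → ℝ} {α β M : ℝ} (hg : Continuous g)
    (hM : ∀ x ∈ Ioo α β, |f x| ≤ M) : ∃ M', ∀ x ∈ Ioo α β, |g x * f x| ≤ M' := by
  obtain ⟨C, hC⟩ := (isCompact_Icc (a := α) (b := β)).exists_bound_of_continuousOn hg.continuousOn
  refine ⟨C * M, fun x hx => ?_⟩
  have hCx : |g x| ≤ C := hC x (Ioo_subset_Icc_self hx)
  rw [abs_mul]
  exact mul_le_mul hCx (hM x hx) (abs_nonneg _) ((abs_nonneg _).trans hCx)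

theorem exp_mul_abs_apply_add {f : ℝ → ℝ} {a b : ℝ} (ha : a ≠ 0) (h : ∀ x, f (x + b) = a * f x)
    (c x : ℝ) :
    exp (c * (x + b)) * |f (x + b)| = exp (log |a| + c * b) * (exp (c * x) * |f x|) := by
  rw [h, abs_mul, exp_add, exp_log (abs_pos.2 ha), mul_add, exp_add]
  ring

/-- If `a₁, a₂, b₁, b₂` are nonzero with `|a₁|^{1/b₁} ≠ |a₂|^{1/b₂}`, and a Baire class 1
function `f` satisfies `f (x+b₁) = a₁ f x` and `f (x+b₂) = a₂ f x` for all `x`,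
then `f ≡ 0`. -/
theorem stmt11 (a₁ a₂ b₁ b₂ : ℝ) (ha₁ : a₁ ≠ 0) (ha₂ : a₂ ≠ 0) (hb₁ : b₁ ≠ 0) (hb₂ : b₂ ≠ 0)
    (hne : Real.exp (Real.log |a₁| / b₁) ≠ Real.exp (Real.log |a₂| / b₂))
    (f : ℝ → ℝ) (hf : BaireClassOne f)
    (h₁ : ∀ x, f (x + b₁) = a₁ * f x) (h₂ : ∀ x, f (x + b₂) = a₂ * f x) :
    ∀ x, f x = 0 := by
  set c := -(log |a₁| / b₁) with hc
  set φ : ℝ → ℝ := fun x => exp (c * x) * |f x|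
  have hc₁ : log |a₁| + c * b₁ = 0 := by rw [hc, neg_mul, div_mul_cancel₀ _ hb₁, add_neg_cancel]
  have hφ₁ : Periodic φ b₁ := fun x => by
    simpa only [hc₁, exp_zero, one_mul] using exp_mul_abs_apply_add ha₁ h₁ c x
  have hφ₂ : ∀ x, φ (x + b₂) = exp (log |a₂| + c * b₂) * φ x := exp_mul_abs_apply_add ha₂ h₂ c
  have hfactor : |exp (log |a₂| + c * b₂)| ≠ 1 := by
    rw [abs_of_pos (exp_pos _), Ne, exp_eq_one_iff]
    refine fun h => hne (congrArg exp ?_)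
    rw [hc] at h
    field_simp at h ⊢
    linarith
  obtain ⟨α, β, M, hαβ, hM⟩ := hf.exists_abs_le_on_Ioo
  obtain ⟨M', hφM⟩ := exists_abs_mul_le_on_Ioo (f := fun x => |f x|) (g := fun x => exp (c * x))
    (by fun_prop) (by simpa only [abs_abs] using hM)
  intro x
  simpa [φ, exp_ne_zero] using
    hφ₁.eq_zero_of_apply_add_eq_mul hb₁ (exp_ne_zero _) hfactor hφ₂ hαβ hφM x
end

section
/- If f : ℝ → ℝ is of Baire class 1 and is periodic mod every element of a dense additive subgroup G ⊆ ℝ, then f is constant. -/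
open Filter Topology

section PointwiseLimit

variable {X Y : Type*} [PseudoMetricSpace Y] {g : ℕ → X → Y} {f : X → Y}

theorem isClosed_setOf_forall_ge_dist_le [TopologicalSpace X] (hg : ∀ n, Continuous (g n))
    (N : ℕ) (ε : ℝ) :
    IsClosed {x | ∀ n ≥ N, dist (g n x) (g N x) ≤ ε} := by
  simp only [Set.ofPred_forall]
  exact isClosed_iInter fun n => isClosed_iInter fun _ =>
    isClosed_le ((hg n).dist (hg N)) continuous_const

theorem exists_forall_ge_dist_le_of_tendsto
    (hlim : ∀ x, Tendsto (fun n => g n x) atTop (𝓝 (f x))) {ε : ℝ} (hε : 0 < ε) (x : X) :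
    ∃ N, ∀ n ≥ N, dist (g n x) (g N x) ≤ ε :=
  (Metric.cauchySeq_iff'.1 (hlim x).cauchySeq ε hε).imp fun _ hN n hn => (hN n hn).le

theorem dist_le_of_forall_ge_dist_le (hlim : ∀ x, Tendsto (fun n => g n x) atTop (𝓝 (f x)))
    {N : ℕ} {ε : ℝ} {x : X} (hx : ∀ n ≥ N, dist (g n x) (g N x) ≤ ε) :
    dist (f x) (g N x) ≤ ε :=
  le_of_tendsto ((hlim x).dist tendsto_const_nhds) (eventually_atTop.2 ⟨N, hx⟩)

theorem exists_isOpen_forall_dist_le_of_tendsto [TopologicalSpace X] [BaireSpace X] [Nonempty X]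
    (hg : ∀ n, Continuous (g n)) (hlim : ∀ x, Tendsto (fun n => g n x) atTop (𝓝 (f x)))
    {ε : ℝ} (hε : 0 < ε) :
    ∃ V : Set X, IsOpen V ∧ V.Nonempty ∧ ∀ x ∈ V, ∀ y ∈ V, dist (f x) (f y) ≤ ε := by
  set δ := ε / 4
  have hδ : 0 < δ := by positivity
  set F : ℕ → Set X := fun N => {x | ∀ n ≥ N, dist (g n x) (g N x) ≤ δ}
  have hcover : ⋃ N, F N = Set.univ :=
    Set.iUnion_eq_univ_iff.2 (exists_forall_ge_dist_le_of_tendsto hlim hδ)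
  obtain ⟨N, x₀, hx₀⟩ :=
    nonempty_interior_of_iUnion_of_closed (isClosed_setOf_forall_ge_dist_le hg · δ) hcover
  have hfg : ∀ x ∈ interior (F N), dist (f x) (g N x) ≤ δ := fun x hx =>
    dist_le_of_forall_ge_dist_le hlim (interior_subset hx)
  refine ⟨interior (F N) ∩ g N ⁻¹' Metric.ball (g N x₀) δ,
    isOpen_interior.inter ((hg N).isOpen_preimage _ Metric.isOpen_ball),
    ⟨x₀, hx₀, Metric.mem_ball_self hδ⟩, fun x ⟨hxF, hxb⟩ y ⟨hyF, hyb⟩ => ?_⟩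
  have hgxy : dist (g N x) (g N y) ≤ 2 * δ := by
    have := dist_triangle_right (g N x) (g N y) (g N x₀)
    linarith [Metric.mem_ball.1 hxb, Metric.mem_ball.1 hyb]
  calc dist (f x) (f y) ≤ dist (f x) (g N x) + dist (g N x) (g N y) + dist (g N y) (f y) :=
        dist_triangle4 _ _ _ _
    _ ≤ δ + 2 * δ + δ := by
        gcongr
        exacts [hfg x hxF, by rw [dist_comm]; exact hfg y hyF]
    _ = ε := by ring

end PointwiseLimit

theorem exists_mem_eq_of_dense_periodic {A β : Type*} [TopologicalSpace A] [AddCommGroup A]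
    [ContinuousSub A] {H : AddSubgroup A} (hH : Dense (H : Set A)) {f : A → β}
    (hper : ∀ h ∈ H, ∀ x, f (x + h) = f x) {V : Set A} (hV : IsOpen V) (hVne : V.Nonempty)
    (y : A) : ∃ v ∈ V, f v = f y := by
  obtain ⟨x₀, hx₀⟩ := hVne
  have hsub : Continuous (y - ·) := continuous_const.sub continuous_id
  obtain ⟨h, hh, hyh⟩ := hH.exists_mem_open (hV.preimage hsub)
    ⟨y - x₀, by simpa using hx₀⟩
  exact ⟨y - h, hyh, by rw [← hper h hh, sub_add_cancel]⟩

/-- A Baire class 1 function periodic mod every element of a dense additive subgroup of `ℝ`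
is constant. -/
theorem stmt12 (f : ℝ → ℝ) (hf : BaireClassOne f) (G : AddSubgroup ℝ)
    (hd : Dense (G : Set ℝ)) (hper : ∀ g ∈ G, ∀ x : ℝ, f (x + g) = f x) :
    ∃ c : ℝ, ∀ x, f x = c := by
  obtain ⟨g, hg, hlim⟩ := hf
  refine ⟨f 0, fun x => eq_of_forall_dist_le fun ε hε => ?_⟩
  obtain ⟨V, hVo, hVne, hV⟩ := exists_isOpen_forall_dist_le_of_tendsto hg hlim hε
  obtain ⟨v, hv, hfv⟩ := exists_mem_eq_of_dense_periodic hd hper hVo hVne x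
  obtain ⟨w, hw, hfw⟩ := exists_mem_eq_of_dense_periodic hd hper hVo hVne 0
  rw [← hfv, ← hfw]
  exact hV v hv w hw
end

section
/- Let V ⊆ ℝ be a ℚ-linear subspace with basis {v_α : α < κ} indexed by ordinals below κ. For nonzero v ∈ V write v = Σ q_i v_{α_i} with q_i ∈ ℚ \ {0} and α_1 < ⋯ < α_n, and set φ(v) = q_n; let B = {v ∈ V : φ(v) > 0}. Then: (i) V = B ∪ (-B) ∪ {0} and B ∩ (-B) = ∅; (ii) for every b ∈ B, the symmetric difference (B + b) Δ B is contained in the ℚ-linear span of {v_α : α ≤ α_n(b)}, where α_n(b) is the largest basis index occurring in b. -/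
/-!
The sign of a nonzero vector is the sign of its coefficient at the largest basis index, so
`B` is the positive cone of the lexicographic order with the top index most significant,
and negation swaps `B` with `-B`. If `v ∈ B` only involves indices `≤ m` and `x` has a
nonzero coordinate above `m`, then `x - v` and `x` agree at the top index of `x`, hence
have the same sign: `x` can only leave or enter `B` under translation by `-v` when it lies
in the span of the basis vectors of index `≤ m`.
-/

namespace Finsupp

variable {ι R : Type*} [LinearOrder ι]

def lastCoeff [Zero R] (f : ι →₀ R) : R :=
  WithBot.recBotCoe 0 (fun i => f i) f.support.max

section Zero

variable [Zero R]

theorem lastCoeff_eq_apply {f : ι →₀ R} {M : ι} (hM : f M ≠ 0)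
    (h : ∀ k, M < k → f k = 0) : f.lastCoeff = f M := by
  have hmax : f.support.max = M := by
    refine le_antisymm (Finset.max_le fun k hk => ?_) (Finset.le_max (mem_support_iff.2 hM))
    exact WithBot.coe_le_coe.2 (not_lt.1 fun hMk => mem_support_iff.1 hk (h k hMk))
  rw [lastCoeff, hmax, WithBot.recBotCoe_coe]

theorem lastCoeff_eq_apply_max' {f : ι →₀ R} (hf : f.support.Nonempty) :
    f.lastCoeff = f (f.support.max' hf) :=
  lastCoeff_eq_apply (mem_support_iff.1 (f.support.max'_mem hf)) fun _ hk =>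
    notMem_support_iff.1 fun hk' => (f.support.le_max' _ hk').not_gt hk

theorem lastCoeff_ne_zero {f : ι →₀ R} (hf : f ≠ 0) : f.lastCoeff ≠ 0 := by
  have hs : f.support.Nonempty := support_nonempty_iff.2 hf
  rw [lastCoeff_eq_apply_max' hs]
  exact mem_support_iff.1 (f.support.max'_mem hs)

end Zero

section AddGroup

variable [AddGroup R]

@[simp]
theorem lastCoeff_neg (f : ι →₀ R) : (-f).lastCoeff = -f.lastCoeff := by
  simp only [lastCoeff, support_neg]
  cases f.support.max <;> simp

theorem lastCoeff_sub_of_forall_lt {f g : ι →₀ R} {j : ι} (hj : j ∈ f.support)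
    (hg : ∀ k ∈ g.support, k < j) : (f - g).lastCoeff = f.lastCoeff := by
  have hs : f.support.Nonempty := ⟨j, hj⟩
  set M := f.support.max' hs
  have hjM : j ≤ M := f.support.le_max' j hj
  have hg_above : ∀ k, j ≤ k → g k = 0 := fun k hk =>
    notMem_support_iff.1 fun hk' => (hg k hk').not_ge hk
  have hf_above : ∀ k, M < k → f k = 0 := fun k hk =>
    notMem_support_iff.1 fun hk' => (f.support.le_max' k hk').not_gt hk
  have hfgM : (f - g) M = f M := by rw [sub_apply, hg_above M hjM, sub_zero]
  rw [lastCoeff_eq_apply_max' hs, ← hfgM]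
  refine lastCoeff_eq_apply (hfgM ▸ mem_support_iff.1 (f.support.max'_mem hs)) fun k hk => ?_
  rw [sub_apply, hf_above k hk, hg_above k (hjM.trans hk.le), sub_zero]

end AddGroup

section Ordered

variable [AddCommGroup R] [LinearOrder R] [IsOrderedAddMonoid R]

theorem eq_zero_or_lastCoeff_pos_or_neg (f : ι →₀ R) :
    f = 0 ∨ 0 < f.lastCoeff ∨ 0 < (-f).lastCoeff := by
  rw [lastCoeff_neg, neg_pos]
  by_cases hf : f = 0
  · exact Or.inl hf
  · exact Or.inr (lastCoeff_ne_zero hf).lt_or_gt.symm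

theorem not_lastCoeff_pos_and_neg (f : ι →₀ R) :
    ¬ (0 < f.lastCoeff ∧ 0 < (-f).lastCoeff) := by
  rw [lastCoeff_neg, neg_pos]
  exact fun h => h.1.not_gt h.2

end Ordered

end Finsupp

/-- Let `V ⊆ ℝ` be a `ℚ`-linear subspace with a basis indexed by a linearly ordered set.
For `v ≠ 0` let `φ v` be the coefficient of the basis vector of largest index in the
representation of `v`, and `B = {v : φ v > 0}`. Then `V = B ∪ (-B) ∪ {0}`,
`B ∩ (-B) = ∅`, and for `v ∈ B` with largest basis index `m`, the symmetric difference
`(B + v) Δ B` is contained in the span of the basis vectors of index `≤ m`. -/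
theorem stmt14 {ι : Type*} [LinearOrder ι] (V : Submodule ℚ ℝ) (b : Module.Basis ι ℚ V) :
    let lastCoeff : V → ℚ := fun v =>
      WithBot.recBotCoe 0 (fun i => b.repr v i) (b.repr v).support.max
    let B : Set V := {v | 0 < lastCoeff v}
    (∀ v : V, v = 0 ∨ v ∈ B ∨ -v ∈ B) ∧
    (∀ v : V, ¬ (v ∈ B ∧ -v ∈ B)) ∧
    (∀ v ∈ B, ∀ m : ι, (b.repr v).support.max = (m : WithBot ι) →
      ∀ x : V, ¬ ((x - v ∈ B) ↔ x ∈ B) →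
        x ∈ Submodule.span ℚ (⇑b '' {i | i ≤ m})) := by
  intro lastCoeff B
  have hB : ∀ v, v ∈ B ↔ 0 < (b.repr v).lastCoeff := fun _ => Iff.rfl
  refine ⟨fun v => ?_, fun v => ?_, fun v _ m hm x hx => ?_⟩
  · simpa only [hB, map_neg, b.repr.map_eq_zero_iff] using
      (b.repr v).eq_zero_or_lastCoeff_pos_or_neg
  · simpa only [hB, map_neg] using (b.repr v).not_lastCoeff_pos_and_neg
  · by_contra hspan
    obtain ⟨j, hj, hmj⟩ := Set.not_subset.1 (mt b.mem_span_image.2 hspan)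
    have hv : ∀ k ∈ (b.repr v).support, k < j := fun k hk =>
      (WithBot.coe_le_coe.1 (hm ▸ Finset.le_max hk)).trans_lt (not_le.1 hmj)
    refine hx ?_
    rw [hB, hB, map_sub, Finsupp.lastCoeff_sub_of_forall_lt hj hv]
end

section
/- Let B ⊆ ℝ satisfy B ∩ (-B) = ∅ and B ∉ 𝓘, where 𝓘 is the ideal of Lebesgue null sets. If f₀ : ℝ → ℝ is zero outside a null set and f₀ - χ_B is periodic mod every element of B, then a contradiction follows; i.e., no function that vanishes almost everywhere can have the property that its difference with χ_B is periodic mod each b ∈ B, provided B is nonnull and B ∩ (-B) = ∅. (Key step: a function periodic mod every b ∈ B is also periodic mod every b ∈ -B and is constant on B ∪ (-B).) -/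
open MeasureTheory

theorem apply_eq_apply_zero_of_forall_periodic {α β : Type*} [AddGroup α] {g : α → β}
    {B : Set α} (hg : ∀ b ∈ B, Function.Periodic g b) {x : α} (hx : x ∈ B ∪ -B) :
    g x = g 0 := by
  rcases hx with hx | hx
  · simpa using hg x hx 0
  · simpa using (hg (-x) hx x).symm

/-- If `B ⊆ ℝ` is not Lebesgue null, `B ∩ (-B) = ∅`, `f₀ = 0` almost everywhere, and
`f₀ - χ_B` is periodic mod every element of `B`, then a contradiction follows. -/
theorem stmt15 (B : Set ℝ) (hdisj : B ∩ (-B) = ∅) (hnn : volume B ≠ 0)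
    (f₀ : ℝ → ℝ) (hae : ∀ᵐ x ∂(volume : Measure ℝ), f₀ x = 0)
    (hper : ∀ b ∈ B, ∀ x : ℝ,
      f₀ (x + b) - Set.indicator B 1 (x + b) = f₀ x - Set.indicator B 1 x) :
    False := by
  set g := f₀ - B.indicator 1
  have hg : ∀ b ∈ B, Function.Periodic g b := hper
  obtain ⟨b, hb, hfb⟩ := Measure.exists_mem_of_measure_ne_zero_of_ae hnn (ae_restrict_of_ae hae)
  obtain ⟨c, hc, hfc⟩ := Measure.exists_mem_of_measure_ne_zero_of_ae
    (by rwa [Measure.measure_neg]) (ae_restrict_of_ae hae)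
  have hcB : c ∉ B := fun hcB => (hdisj.subset ⟨hcB, hc⟩ : c ∈ (∅ : Set ℝ))
  -- `g = -1` at `b` but `g = 0` at `c`, while `g b = g 0 = g c`.
  have hgb := apply_eq_apply_zero_of_forall_periodic hg (Or.inl hb)
  have hgc := apply_eq_apply_zero_of_forall_periodic hg (Or.inr hc)
  simp only [g, Pi.sub_apply, Set.indicator_of_mem hb, Set.indicator_of_notMem hcB, hfb, hfc,
    Pi.one_apply] at hgb hgc
  linarith
end

section
/- Let (h_n) be a sequence of functions on ℝ such that for every n and every closed subinterval I ⊆ [0,1] of length 1/n there is a closed nondegenerate subinterval J ⊆ I on which |h_n| > 1. Then the set A = {x ∈ [0,1] : h_n(x) → 0} is not residual (comeager) in [0,1]. -/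
/-!
For every `N`, the points lying in the interior of `{x | 1 < |h n x|}` for some `n ≥ N` form a
dense open subset of `[0,1]`: every interval of length `1/n` contains such a nondegenerate
interval. So the points where `|h n x| > 1` infinitely often form a residual set. Since `[0,1]`
is a Baire space, it cannot also contain a residual set of points where `h n x → 0`.
-/

open Set Filter

theorem frequently_mem_residual {X : Type*} [TopologicalSpace X] {s : ℕ → Set X}
    (hs : ∀ N, Dense (⋃ n ≥ N, interior (s n))) :
    {x | ∃ᶠ n in atTop, x ∈ s n} ∈ residual X := by
  have hopen (N : ℕ) : IsOpen (⋃ n ≥ N, interior (s n)) :=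
    isOpen_biUnion fun _ _ => isOpen_interior
  refine mem_of_superset (countable_iInter_mem.2 fun N => residual_of_dense_open (hopen N) (hs N))
    fun x hx => frequently_atTop.2 fun N => ?_
  obtain ⟨n, hnN, hxn⟩ := mem_iUnion₂.1 (mem_iInter.1 hx N)
  exact ⟨n, hnN, interior_subset hxn⟩

theorem exists_Icc_length_eq_of_mem_unitInterval {x ℓ : ℝ} (hx : x ∈ Icc (0 : ℝ) 1)
    (hℓ₀ : 0 ≤ ℓ) (hℓ : ℓ ≤ 1) : ∃ a b : ℝ, 0 ≤ a ∧ b ≤ 1 ∧ b - a = ℓ ∧ a ≤ x ∧ x ≤ b := by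
  by_cases hxℓ : x + ℓ ≤ 1
  · exact ⟨x, x + ℓ, hx.1, hxℓ, by ring, le_rfl, by linarith⟩
  · exact ⟨1 - ℓ, 1, by linarith, le_rfl, by ring, by linarith, hx.2⟩

theorem dense_iUnion_interior_of_forall_exists_Icc_subset {s : ℕ → Set ℝ}
    (hs : ∀ n : ℕ, 1 ≤ n → ∀ a b : ℝ, 0 ≤ a → b ≤ 1 → b - a = 1 / n →
      ∃ c d : ℝ, a ≤ c ∧ c < d ∧ d ≤ b ∧ Icc c d ⊆ s n) (N : ℕ) :
    Dense (⋃ n ≥ N, interior ((↑) ⁻¹' s n : Set (Icc (0 : ℝ) 1))) := by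
  refine Metric.dense_iff.2 fun x ε hε => ?_
  obtain ⟨n, hn⟩ := exists_nat_gt (max (N : ℝ) (1 / ε))
  have hnN : N ≤ n := by exact_mod_cast (le_max_left _ _).trans hn.le
  have hn_pos : (0 : ℝ) < n := (lt_max_of_lt_right (one_div_pos.2 hε)).trans hn
  have hn_one : 1 ≤ n := Nat.cast_pos.1 hn_pos
  have hn_small : 1 / (n : ℝ) < ε := (one_div_lt hn_pos hε).2 ((le_max_right _ _).trans_lt hn)
  have hn_le : 1 / (n : ℝ) ≤ 1 := (div_le_one hn_pos).2 (by exact_mod_cast hn_one)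
  obtain ⟨a, b, ha, hb, hba, hax, hxb⟩ :=
    exists_Icc_length_eq_of_mem_unitInterval x.2 (by positivity) hn_le
  obtain ⟨c, d, hac, hcd, hdb, hcds⟩ := hs n hn_one a b ha hb hba
  obtain ⟨m, hcm, hmd⟩ := exists_between hcd
  have hm : m ∈ Icc (0 : ℝ) 1 := ⟨by linarith, by linarith⟩
  refine ⟨⟨m, hm⟩, ?_, mem_iUnion₂.2 ⟨n, hnN, ?_⟩⟩
  · rw [Metric.mem_ball, Subtype.dist_eq, Real.dist_eq]
    exact abs_sub_lt_iff.2 ⟨by linarith, by linarith⟩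
  · exact interior_maximal (t := Subtype.val ⁻¹' Ioo c d)
      (fun y hy => hcds (Ioo_subset_Icc_self hy)) (isOpen_Ioo.preimage continuous_subtype_val)
      ⟨hcm, hmd⟩

/-- If for every `n ≥ 1` and every closed subinterval `I ⊆ [0,1]` of length `1/n` there is a
closed nondegenerate subinterval `J ⊆ I` on which `|h n| > 1`, then the set of points of
`[0,1]` where `h n → 0` is not residual (comeager) in `[0,1]`. -/
theorem stmt19 (h : ℕ → ℝ → ℝ)
    (hyp : ∀ n : ℕ, 1 ≤ n → ∀ a b : ℝ, 0 ≤ a → b ≤ 1 → b - a = 1 / n →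
      ∃ c d : ℝ, a ≤ c ∧ c < d ∧ d ≤ b ∧ ∀ x ∈ Set.Icc c d, 1 < |h n x|) :
    ¬ ({x : Set.Icc (0 : ℝ) 1 |
          Filter.Tendsto (fun n => h n (x : ℝ)) Filter.atTop (nhds 0)}
        ∈ residual (Set.Icc (0 : ℝ) 1)) := by
  intro hA
  have hlarge := frequently_mem_residual
    (dense_iUnion_interior_of_forall_exists_Icc_subset (s := fun n => {y | 1 < |h n y|}) hyp)
  obtain ⟨x, hx_lim, hx_large⟩ := (dense_of_mem_residual (inter_mem hA hlarge)).nonempty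
  have hx_abs : Tendsto (fun n => |h n x|) atTop (nhds 0) := by simpa using hx_lim.abs
  have hx_small : ∀ᶠ n in atTop, |h n x| < 1 := hx_abs.eventually_lt_const one_pos
  obtain ⟨n, hn_large, hn_small⟩ := (hx_large.and_eventually hx_small).exists
  exact (lt_asymm hn_large hn_small).elim
end
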